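/- arXiv:2301.05458 — 2 statements merged into one kernel-verified Lean document; each statement's English description precedes it below -/
import Mathlib

section
/- Let T > 0, let v : [0,T] × ℝ → ℝ be continuous, and let g : ℝ → ℝ satisfy v(t,x) ≥ g(x) for all (t,x) ∈ [0,T] × ℝ. Define C := {(t,x) ∈ [0,T] × ℝ : v(t,x) > g(x)}. Assume that for every (t,x) ∈ C with t ∈ (0,T), the map s ↦ v(s,x) is differentiable at t with derivative at most 0. Then for every x ∈ ℝ the map t ↦ v(t,x) is non-increasing on [0,T]; in particular, if (t,x) ∈ C and 0 ≤ s ≤ t then (s,x) ∈ C and v(s,x) ≥ v(t,x). -/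
open Set

/-- Key one-dimensional lemma. -/
lemma key_mono (f : ℝ → ℝ) (T : ℝ) (gx : ℝ)
    (hf : ContinuousOn f (Icc 0 T))
    (hfg : ∀ u ∈ Icc (0:ℝ) T, gx ≤ f u)
    (hd : ∀ u ∈ Ioo (0:ℝ) T, gx < f u → ∃ d : ℝ, HasDerivAt f d u ∧ d ≤ 0)
    {s t : ℝ} (hs : 0 ≤ s) (hst : s ≤ t) (ht : t ≤ T) : f t ≤ f s := by
  by_cases hgt : f t ≤ gx
  · exact hgt.trans (hfg s ⟨hs, hst.trans ht⟩)
  push_neg at hgt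
  set S : Set ℝ := {u | u ∈ Icc s t ∧ (f u = gx ∨ u = s)} with hS
  have hSsub : S ⊆ Icc s t := fun u hu => hu.1
  have hsS : s ∈ S := ⟨⟨le_refl s, hst⟩, Or.inr rfl⟩
  have hfst : ContinuousOn f (Icc s t) :=
    hf.mono (Icc_subset_Icc hs ht)
  have hclosed : IsClosed S := by
    have h1 : IsClosed (Icc s t ∩ f ⁻¹' {gx}) :=
      hfst.preimage_isClosed_of_isClosed isClosed_Icc isClosed_singleton
    have h2 : S = (Icc s t ∩ f ⁻¹' {gx}) ∪ ({s} ∩ Icc s t) := by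
      ext u
      simp only [hS, mem_setOf_eq, mem_inter_iff, mem_preimage, mem_singleton_iff, mem_union]
      constructor
      · rintro ⟨hu, h | h⟩
        · exact Or.inl ⟨hu, h⟩
        · exact Or.inr ⟨h, hu⟩
      · rintro (⟨hu, h⟩ | ⟨h, hu⟩)
        · exact ⟨hu, Or.inl h⟩
        · exact ⟨hu, Or.inr h⟩
    rw [h2]
    exact h1.union (isClosed_singleton.inter isClosed_Icc)
  have hScomp : IsCompact S := isCompact_Icc.of_isClosed_subset hclosed hSsub
  have ht0 : sSup S ∈ S := hScomp.sSup_mem ⟨s, hsS⟩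
  set t₀ := sSup S with ht₀def
  have ht0le : t₀ ≤ t := ht0.1.2
  have hst0 : s ≤ t₀ := ht0.1.1
  rcases eq_or_lt_of_le ht0le with heq | hlt
  · -- t₀ = t
    rcases ht0.2 with h | h
    · rw [heq] at h; exact absurd h hgt.ne'
    · rw [heq] at h; rw [h]
  · -- t₀ < t, apply antitone on [t₀, t]
    have hanti : AntitoneOn f (Icc t₀ t) := by
      apply antitoneOn_of_deriv_nonpos (convex_Icc t₀ t)
      · exact hf.mono (Icc_subset_Icc (hs.trans hst0) ht)
      · rw [interior_Icc]
        intro u hu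
        have hu' : gx < f u := by
          rcases lt_or_eq_of_le (hfg u ⟨hs.trans (hst0.trans hu.1.le),
              hu.2.le.trans ht⟩) with h | h
          · exact h
          · exfalso
            have : u ∈ S := ⟨⟨hst0.trans hu.1.le, hu.2.le⟩, Or.inl h.symm⟩
            exact absurd (le_csSup hScomp.bddAbove this) (not_le.mpr hu.1)
        obtain ⟨d, hdd, _⟩ := hd u ⟨lt_of_le_of_lt (hs.trans hst0) hu.1,
          lt_of_lt_of_le hu.2 ht⟩ hu'
        exact hdd.differentiableAt.differentiableWithinAt
      · rw [interior_Icc]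
        intro u hu
        have hu' : gx < f u := by
          rcases lt_or_eq_of_le (hfg u ⟨hs.trans (hst0.trans hu.1.le),
              hu.2.le.trans ht⟩) with h | h
          · exact h
          · exfalso
            have : u ∈ S := ⟨⟨hst0.trans hu.1.le, hu.2.le⟩, Or.inl h.symm⟩
            exact absurd (le_csSup hScomp.bddAbove this) (not_le.mpr hu.1)
        obtain ⟨d, hdd, hd0⟩ := hd u ⟨lt_of_le_of_lt (hs.trans hst0) hu.1,
          lt_of_lt_of_le hu.2 ht⟩ hu'
        rw [hdd.deriv]
        exact hd0
    have hft : f t ≤ f t₀ :=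
      hanti ⟨le_refl t₀, ht0le⟩ ⟨ht0le, le_refl t⟩ ht0le
    rcases ht0.2 with h | h
    · exact hft.trans (h.le.trans (hfg s ⟨hs, hst.trans ht⟩))
    · rw [h] at hft; exact hft

/-- Step 2 of the proof of Theorem 4.2: if `v` is continuous on `[0,T] × ℝ`, dominates the
reward `g`, and on the continuation region `C = {v > g}` the time derivative of `v` exists
and is `≤ 0` (for interior times), then `t ↦ v t x` is non-increasing on `[0,T]`; in
particular if `(t,x) ∈ C` and `0 ≤ s ≤ t` then `(s,x) ∈ C` and `v s x ≥ v t x`. -/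
theorem stmt_1 (T : ℝ) (hT : 0 < T)
    (v : ℝ → ℝ → ℝ) (g : ℝ → ℝ)
    (hv : ContinuousOn (fun p : ℝ × ℝ => v p.1 p.2) (Set.Icc (0 : ℝ) T ×ˢ Set.univ))
    (hvg : ∀ t ∈ Set.Icc (0 : ℝ) T, ∀ x : ℝ, g x ≤ v t x)
    (C : Set (ℝ × ℝ))
    (hC : C = {p : ℝ × ℝ | p.1 ∈ Set.Icc (0 : ℝ) T ∧ g p.2 < v p.1 p.2})
    (hderiv : ∀ t x : ℝ, (t, x) ∈ C → t ∈ Set.Ioo (0 : ℝ) T →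
      ∃ d : ℝ, HasDerivAt (fun s => v s x) d t ∧ d ≤ 0) :
    (∀ x : ℝ, ∀ s ∈ Set.Icc (0 : ℝ) T, ∀ t ∈ Set.Icc (0 : ℝ) T, s ≤ t → v t x ≤ v s x) ∧
    (∀ t x : ℝ, (t, x) ∈ C → ∀ s : ℝ, 0 ≤ s → s ≤ t → (s, x) ∈ C ∧ v t x ≤ v s x) := by
  have main : ∀ x : ℝ, ∀ s ∈ Set.Icc (0 : ℝ) T, ∀ t ∈ Set.Icc (0 : ℝ) T,
      s ≤ t → v t x ≤ v s x := by
    intro x s hsmem t htmem hst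
    refine key_mono (fun u => v u x) T (g x) ?_ ?_ ?_ hsmem.1 hst htmem.2
    · exact hv.comp ((continuous_id.prodMk continuous_const).continuousOn)
        (fun u hu => ⟨hu, mem_univ x⟩)
    · intro u hu; exact hvg u hu x
    · intro u hu hgu
      exact hderiv u x (by rw [hC]; exact ⟨Ioo_subset_Icc_self hu, hgu⟩) hu
  refine ⟨main, ?_⟩
  intro t x htx s hs0 hst
  rw [hC] at htx
  obtain ⟨htmem, hg⟩ := htx
  have hsmem : s ∈ Set.Icc (0:ℝ) T := ⟨hs0, hst.trans htmem.2⟩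
  have h := main x s hsmem t htmem hst
  refine ⟨?_, h⟩
  rw [hC]
  exact ⟨hsmem, lt_of_lt_of_le hg h⟩
end

section
/- Let p ∈ (0,1) and let l, r ∈ ℝ with l < r and r ≥ −l. Define f : ℝ × ℝ → ℝ by f(t,x) = (p·l·exp(l·x − l²·t/2) + (1−p)·r·exp(r·x − r²·t/2)) / (p·exp(l·x − l²·t/2) + (1−p)·exp(r·x − r²·t/2)). Then for every x ∈ ℝ the map t ↦ f(t,x) is non-increasing on ℝ. -/
/-- Section 7.3: for the two-point-prior filtering drift `f`, if `r ≥ −l` then `t ↦ f t x`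
is non-increasing on `ℝ` for every `x`. -/
theorem stmt_5 (p l r : ℝ) (hp : p ∈ Set.Ioo (0 : ℝ) 1) (hlr : l < r) (hrl : r ≥ -l)
    (f : ℝ → ℝ → ℝ)
    (hf : ∀ t x : ℝ, f t x =
      (p * l * Real.exp (l * x - l ^ 2 * t / 2) +
        (1 - p) * r * Real.exp (r * x - r ^ 2 * t / 2)) /
      (p * Real.exp (l * x - l ^ 2 * t / 2) +
        (1 - p) * Real.exp (r * x - r ^ 2 * t / 2))) :
    ∀ x : ℝ, Antitone (fun t => f t x) := by
  obtain ⟨hp0, hp1⟩ := hp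
  have hq : (0:ℝ) < 1 - p := by linarith
  intro x s t hst
  simp only [hf]
  set As := Real.exp (l * x - l ^ 2 * s / 2) with hAs
  set At := Real.exp (l * x - l ^ 2 * t / 2) with hAt
  set Bs := Real.exp (r * x - r ^ 2 * s / 2) with hBs
  set Bt := Real.exp (r * x - r ^ 2 * t / 2) with hBt
  have hAsp : 0 < As := Real.exp_pos _
  have hAtp : 0 < At := Real.exp_pos _
  have hBsp : 0 < Bs := Real.exp_pos _
  have hBtp : 0 < Bt := Real.exp_pos _
  have hDs : 0 < p * As + (1 - p) * Bs := by positivity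
  have hDt : 0 < p * At + (1 - p) * Bt := by positivity
  rw [div_le_div_iff₀ hDt hDs]
  have hl2 : l ^ 2 ≤ r ^ 2 := by nlinarith
  have hkey : As * Bt ≤ At * Bs := by
    rw [hAs, hAt, hBs, hBt, ← Real.exp_add, ← Real.exp_add]
    apply Real.exp_le_exp.mpr
    nlinarith [mul_nonneg (sub_nonneg.mpr hl2) (sub_nonneg.mpr hst)]
  nlinarith [mul_nonneg (mul_nonneg hp0.le hq.le) (mul_nonneg (sub_nonneg.mpr hlr.le) (sub_nonneg.mpr hkey))]
end
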